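/- arXiv:2410.22455 — 2 statements merged into one kernel-verified Lean document; each statement's English description precedes it below -/
import Mathlib

section
/- Let F₁ : ℝ → ℝ be smooth, and on the open set where w·u − v ≠ 0 define f₁(u,v,w) = F₁(w), f₂(u,v,w) = −2w·F₁(w)/(wu − v), f₃(u,v,w) = 2w²·F₁(w)/(wu − v). Then the corresponding skew-symmetric ultralocal operator (ω¹²=f₁, ω¹³=f₂, ω²³=f₃) satisfies the Jacobi condition f₁∂_v f₃ + f₂∂_w f₃ + f₁∂_u f₂ − f₃∂_w f₂ − f₂∂_u f₁ − f₃∂_v f₁ = 0. -/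
noncomputable def du (f : ℝ → ℝ → ℝ → ℝ) (u v w : ℝ) : ℝ := deriv (fun t => f t v w) u
noncomputable def dv (f : ℝ → ℝ → ℝ → ℝ) (u v w : ℝ) : ℝ := deriv (fun t => f u t w) v
noncomputable def dw (f : ℝ → ℝ → ℝ → ℝ) (u v w : ℝ) : ℝ := deriv (fun t => f u v t) w

/-- For smooth F₁ and, on the region w·u − v ≠ 0, f₁ = F₁(w),
f₂ = −2w·F₁(w)/(wu−v), f₃ = 2w²·F₁(w)/(wu−v), the corresponding skew-symmetric
ultralocal operator satisfies the scalar Jacobi condition. -/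
theorem P23_ultralocal_jacobi
    (F₁ : ℝ → ℝ) (hF₁ : ContDiff ℝ (⊤ : ℕ∞) F₁)
    (f₁ f₂ f₃ : ℝ → ℝ → ℝ → ℝ)
    (h₁ : f₁ = fun _ _ w => F₁ w)
    (h₂ : f₂ = fun u v w => -2 * w * F₁ w / (w * u - v))
    (h₃ : f₃ = fun u v w => 2 * w ^ 2 * F₁ w / (w * u - v)) :
    ∀ u v w : ℝ, w * u - v ≠ 0 →
      f₁ u v w * dv f₃ u v w + f₂ u v w * dw f₃ u v w + f₁ u v w * du f₂ u v w
      - f₃ u v w * dw f₂ u v w - f₂ u v w * du f₁ u v w - f₃ u v w * dv f₁ u v w = 0 := by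
  subst h₁ h₂ h₃
  intro u v w hD
  have hF : HasDerivAt F₁ (deriv F₁ w) w :=
    (hF₁.differentiable (by simp) w).hasDerivAt
  set A := F₁ w with hA
  set A' := deriv F₁ w with hA'
  set D := w * u - v with hDdef
  -- du f₁ = 0, dv f₁ = 0
  have e1 : du (fun _ _ w => F₁ w) u v w = 0 := by simp [du]
  have e2 : dv (fun _ _ w => F₁ w) u v w = 0 := by simp [dv]
  -- dv f₃
  have hden_v : HasDerivAt (fun t : ℝ => w * u - t) (-1) v :=
    (hasDerivAt_id v).const_sub (w * u)
  have e3 : dv (fun u v w => 2 * w ^ 2 * F₁ w / (w * u - v)) u v w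
      = (0 * D - 2 * w ^ 2 * A * (-1)) / D ^ 2 := by
    unfold dv
    exact ((hasDerivAt_const v (2 * w ^ 2 * A)).div hden_v hD).deriv
  -- du f₂
  have hden_u : HasDerivAt (fun t : ℝ => w * t - v) w u := by
    simpa using ((hasDerivAt_id u).const_mul w).sub_const v
  have e4 : du (fun u v w => -2 * w * F₁ w / (w * u - v)) u v w
      = (0 * D - -2 * w * A * w) / D ^ 2 := by
    unfold du
    exact ((hasDerivAt_const u (-2 * w * A)).div hden_u hD).deriv
  -- dw f₃ : numerator 2 t^2 F₁ t, denom t*u - v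
  have hnum3 : HasDerivAt (fun t : ℝ => 2 * t ^ 2 * F₁ t)
      (2 * (2 * w) * A + 2 * w ^ 2 * A') w := by
    have h1 : HasDerivAt (fun t : ℝ => 2 * t ^ 2) (2 * (2 * w)) w := by
      simpa using ((hasDerivAt_pow 2 w).const_mul 2)
    exact h1.mul hF
  have hdenw : HasDerivAt (fun t : ℝ => t * u - v) u w := by
    simpa using ((hasDerivAt_id w).mul_const u).sub_const v
  have e5 : dw (fun u v w => 2 * w ^ 2 * F₁ w / (w * u - v)) u v w
      = ((2 * (2 * w) * A + 2 * w ^ 2 * A') * D - 2 * w ^ 2 * A * u) / D ^ 2 := by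
    unfold dw
    exact (hnum3.div hdenw hD).deriv
  -- dw f₂ : numerator -2 t F₁ t
  have hnum2 : HasDerivAt (fun t : ℝ => -2 * t * F₁ t) (-2 * A + -2 * w * A') w := by
    have h1 : HasDerivAt (fun t : ℝ => -2 * t) (-2) w := by
      simpa using (hasDerivAt_id w).const_mul (-2 : ℝ)
    exact h1.mul hF
  have e6 : dw (fun u v w => -2 * w * F₁ w / (w * u - v)) u v w
      = ((-2 * A + -2 * w * A') * D - -2 * w * A * u) / D ^ 2 := by
    unfold dw
    exact (hnum2.div hdenw hD).deriv
  simp only [e1, e2, e3, e4, e5, e6]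
  simp only [← hA, ← hDdef]
  field_simp
  ring
end

section
/- Let g = [[1,0],[0,0]] (x-direction), g̃ = [[v,0],[0,0]] (y-direction), and nonzero b-coefficients only b₂^{11,2} = 1/2 (coming from the degenerate operator P₁ = diag(1,0) d/dx + diag(v,0) d/dy + diag(v_y/2, 0)). Let ω = [[0, f(u,v)],[−f(u,v), 0]]. Then the compatibility conditions T^{ijkα} = T^{kijα} and ∂_s T^{ijkα} = b_s^{lkα} ω_l^{ij}-type supplementary conditions of Theorem 2.3, where T^{ijkα} = g^{ilα} ∂_l ω^{jk} − b_l^{ijα} ω^{lk} − b_l^{ikα} ω^{jl}, hold if and only if ∂f/∂u = 0, i.e. f = F(v) for an arbitrary function F. -/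
noncomputable def d2₁ (f : ℝ → ℝ → ℝ) (u v : ℝ) : ℝ := deriv (fun t => f t v) u
noncomputable def d2₂ (f : ℝ → ℝ → ℝ) (u v : ℝ) : ℝ := deriv (fun t => f u t) v
noncomputable def D2 : Fin 2 → (ℝ → ℝ → ℝ) → ℝ → ℝ → ℝ := ![d2₁, d2₂]

/-- For the degenerate operator P₁ (g¹ = diag(1,0), g² = diag(v,0), only nonzero
b-coefficient b₂^{11,2} = 1/2) and ω = [[0,f],[−f,0]], the supplementary
compatibility conditions of Theorem 2.3 hold iff ∂f/∂u = 0. -/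
theorem P1_compatibility_iff
    (f : ℝ → ℝ → ℝ) (hf : ContDiff ℝ (⊤ : ℕ∞) (fun p : ℝ × ℝ => f p.1 p.2))
    (ω : Fin 2 → Fin 2 → ℝ → ℝ → ℝ)
    (hω : ω = ![![fun _ _ => 0, f], ![fun u v => -(f u v), fun _ _ => 0]])
    (g : Fin 2 → Fin 2 → Fin 2 → ℝ → ℝ → ℝ)
    (hg : g = ![![![fun _ _ => 1, fun _ _ => 0], ![fun _ _ => 0, fun _ _ => 0]],
                ![![fun _ v => v, fun _ _ => 0], ![fun _ _ => 0, fun _ _ => 0]]])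
    -- b α i j k denotes b_k^{ij,α}
    (b : Fin 2 → Fin 2 → Fin 2 → Fin 2 → ℝ → ℝ → ℝ)
    (hb : b = fun α i j k _ _ =>
      if α = 1 ∧ i = 0 ∧ j = 0 ∧ k = 1 then (1 : ℝ) / 2 else 0)
    (T : Fin 2 → Fin 2 → Fin 2 → Fin 2 → ℝ → ℝ → ℝ)
    (hT : T = fun α i j k u v =>
      (∑ l : Fin 2, g α i l u v * D2 l (ω j k) u v)
      - (∑ l : Fin 2, b α i j l u v * ω l k u v)
      - (∑ l : Fin 2, b α i k l u v * ω j l u v)) :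
    ((∀ α i j k : Fin 2, ∀ u v : ℝ, T α i j k u v = T α k i j u v) ∧
     (∀ α i j k s : Fin 2, ∀ u v : ℝ,
        D2 s (T α i j k) u v
          = (∑ l : Fin 2, b α l k s u v * D2 l (ω i j) u v)
            + ∑ l : Fin 2, (D2 l (b α k i s) u v - D2 s (b α k i l) u v) * ω l j u v))
    ↔ (∀ u v : ℝ, d2₁ f u v = 0) := by
  constructor
  · rintro ⟨hsym, -⟩ u v
    have h := hsym 0 0 0 1 u v
    rw [hT] at h
    simpa [hω, hg, hb, Fin.sum_univ_two, D2, d2₁, d2₂] using h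
  · intro hfu
    have h1 : ∀ u v : ℝ, deriv (fun t => f t v) u = 0 := fun u v => hfu u v
    have hT0 : ∀ α i j k : Fin 2, T α i j k = fun _ _ => (0 : ℝ) := by
      intro α i j k
      funext u v
      rw [hT]
      fin_cases α <;> fin_cases i <;> fin_cases j <;> fin_cases k <;>
        simp [hω, hg, hb, Fin.sum_univ_two, D2, d2₁, d2₂, deriv.neg, h1]
    refine ⟨fun α i j k u v => by rw [hT0 α i j k, hT0 α k i j], ?_⟩
    intro α i j k s u v
    rw [hT0 α i j k]
    fin_cases α <;> fin_cases i <;> fin_cases j <;> fin_cases k <;> fin_cases s <;>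
      simp [hω, hb, Fin.sum_univ_two, D2, d2₁, d2₂, deriv.neg, h1]
end
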